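/- arXiv:2511.01875 — 4 statements merged into one kernel-verified Lean document; each statement's English description precedes it below -/
import Mathlib

section
/- Left tail bound for non-central chi-squared: let X ∼ χ²_k(λ) with k ≥ 1 degrees of freedom and non-centrality parameter λ > 0. Then for any 0 < w < λ, P(X < w) ≤ (w/λ)^{k/4} · exp(−(√λ − √w)²/2). -/
open MeasureTheory ProbabilityTheory

open Real
open scoped ENNReal NNReal

lemma aux_gauss (c : ℝ) {t : ℝ} (ht : t < 0) :
    ∫ x, Real.exp (t * (x + c) ^ 2) ∂(gaussianReal 0 1)
      = Real.exp (t * c ^ 2 / (1 - 2 * t)) / Real.sqrt (1 - 2 * t) := by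
  have h12t : (0:ℝ) < 1 - 2 * t := by linarith
  rw [gaussianReal_of_var_ne_zero 0 one_ne_zero]
  have hpdf : gaussianPDF 0 1 = fun x => ((gaussianPDFReal 0 1 x).toNNReal : ℝ≥0∞) := rfl
  rw [hpdf, integral_withDensity_eq_integral_smul
    ((measurable_gaussianPDFReal 0 1).real_toNNReal)]
  have hsmul : ∀ x : ℝ, (gaussianPDFReal 0 1 x).toNNReal • Real.exp (t * (x + c) ^ 2)
      = (Real.sqrt (2 * π))⁻¹ * (Real.exp (t * c ^ 2 / (1 - 2 * t))
          * Real.exp (-((1 - 2 * t) / 2) * (x + (-2 * t * c) / (1 - 2 * t)) ^ 2)) := by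
    intro x
    rw [NNReal.smul_def, smul_eq_mul, Real.coe_toNNReal _ (gaussianPDFReal_nonneg 0 1 x),
      gaussianPDFReal]
    push_cast
    rw [mul_one, mul_assoc, ← Real.exp_add, ← Real.exp_add]
    congr 2
    field_simp [h12t.ne']
    ring
  simp_rw [hsmul]
  rw [integral_const_mul, integral_const_mul,
    integral_add_right_eq_self (fun x => Real.exp (-((1 - 2 * t) / 2) * x ^ 2))
      ((-2 * t * c) / (1 - 2 * t)),
    integral_gaussian]
  have hπ : (0:ℝ) < 2 * π := by positivity
  rw [show π / ((1 - 2 * t) / 2) = (2 * π) / (1 - 2 * t) by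
      rw [div_div_eq_mul_div, mul_comm],
    Real.sqrt_div hπ.le]
  have h2π : Real.sqrt (2 * π) ≠ 0 := by positivity
  field_simp

lemma aux_indep_ae {Ω : Type*} [MeasurableSpace Ω] {μ : Measure Ω} {k : ℕ}
    {f g : Fin k → Ω → ℝ} (h : iIndepFun f μ)
    (hfg : ∀ i, f i =ᵐ[μ] g i) : iIndepFun g μ := by
  rw [iIndepFun_iff_measure_inter_preimage_eq_mul] at h ⊢
  intro S sets hS
  have h1 : ∀ i, μ (f i ⁻¹' sets i) = μ (g i ⁻¹' sets i) := fun i =>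
    measure_congr (Filter.eventuallyEq_set.2 ((hfg i).mono fun ω hω => by
      simp only [Set.mem_preimage, hω]))
  have hall : ∀ᵐ ω ∂μ, ∀ i, f i ω = g i ω := ae_all_iff.2 hfg
  have h2 : μ (⋂ i ∈ S, f i ⁻¹' sets i) = μ (⋂ i ∈ S, g i ⁻¹' sets i) :=
    measure_congr (Filter.eventuallyEq_set.2 (hall.mono fun ω hω => by
      simp only [Set.mem_iInter, Set.mem_preimage, hω]))
  rw [← h2, h S hS]
  exact Finset.prod_congr rfl fun i _ => h1 i

/-- Left tail bound for a non-central chi-squared variable `X = ∑_{i<k} (Z_i + c_i)²` with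
`k ≥ 1` degrees of freedom and non-centrality parameter `λ = ∑ c_i² > 0` (the `Z_i` i.i.d.
standard normal): for any `0 < w < λ`,
`P(X < w) ≤ (w/λ)^(k/4) exp(-(√λ - √w)²/2)`. -/
theorem stmt13 {Ω : Type*} [MeasurableSpace Ω] (μ : Measure Ω) [IsProbabilityMeasure μ]
    {k : ℕ} (hk : 1 ≤ k) (Z : Fin k → Ω → ℝ)
    (hZ : ∀ i, μ.map (Z i) = gaussianReal 0 1)
    (hindep : iIndepFun Z μ)
    (c : Fin k → ℝ) (l : ℝ) (hl : l = ∑ i, (c i) ^ 2) (hlpos : 0 < l)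
    (w : ℝ) (hw0 : 0 < w) (hwl : w < l) :
    (μ {ω | (∑ i, (Z i ω + c i) ^ 2) < w}).toReal ≤
      (w / l) ^ ((k : ℝ) / 4) * Real.exp (-(Real.sqrt l - Real.sqrt w) ^ 2 / 2) := by
  -- a.e.-measurable versions
  have haZ : ∀ i, AEMeasurable (Z i) μ := by
    intro i
    by_contra hc
    have := Measure.map_of_not_aemeasurable (μ := μ) hc
    rw [hZ i] at this
    exact (IsProbabilityMeasure.ne_zero (gaussianReal 0 1)) this
  set Y : Fin k → Ω → ℝ := fun i => (haZ i).mk (Z i) with hY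
  have hYm : ∀ i, Measurable (Y i) := fun i => (haZ i).measurable_mk
  have hYae : ∀ i, Z i =ᵐ[μ] Y i := fun i => (haZ i).ae_eq_mk
  have hYmap : ∀ i, μ.map (Y i) = gaussianReal 0 1 := fun i => by
    rw [← Measure.map_congr (hYae i), hZ i]
  have hYindep : iIndepFun Y μ := aux_indep_ae hindep hYae
  -- notation
  set a := Real.sqrt l with ha
  set b := Real.sqrt w with hb
  have hb0 : 0 < b := Real.sqrt_pos.2 hw0
  have ha0 : 0 < a := Real.sqrt_pos.2 hlpos
  have hba : b < a := Real.sqrt_lt_sqrt hw0.le hwl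
  have hl2 : l = a ^ 2 := (Real.sq_sqrt hlpos.le).symm
  have hw2 : w = b ^ 2 := (Real.sq_sqrt hw0.le).symm
  set t : ℝ := (b - a) / (2 * b) with hts
  have htneg : t < 0 := div_neg_of_neg_of_pos (by linarith) (by linarith)
  have h12t : 1 - 2 * t = a / b := by
    rw [hts]
    field_simp
    ring
  have h12tpos : (0:ℝ) < 1 - 2 * t := by rw [h12t]; positivity
  -- the squared shifted variables
  set X : Fin k → Ω → ℝ := fun i ω => (Y i ω + c i) ^ 2 with hX
  have hXm : ∀ i, Measurable (X i) :=
    fun i => ((hYm i).add_const (c i)).pow_const 2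
  have hXindep : iIndepFun X μ :=
    hYindep.comp (fun i x => (x + c i) ^ 2)
      (fun i => (measurable_id.add_const (c i)).pow_const 2)
  -- integrability of exp(t * ∑ X)
  have hSfun : (∑ i, X i) = fun ω => ∑ i, X i ω := by
    funext ω; simp [Finset.sum_apply]
  have hSm : Measurable (∑ i, X i) := by
    rw [hSfun]; exact Finset.measurable_sum _ fun i _ => hXm i
  have h_int : Integrable (fun ω => Real.exp (t * (∑ i, X i) ω)) μ := by
    refine Integrable.mono' (integrable_const 1) ((hSm.const_mul t).exp.aestronglyMeasurable) ?_
    refine Filter.Eventually.of_forall fun ω => ?_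
    rw [Real.norm_eq_abs, abs_of_pos (Real.exp_pos _), ← Real.exp_zero, Real.exp_le_exp]
    refine mul_nonpos_of_nonpos_of_nonneg htneg.le ?_
    rw [Finset.sum_apply]
    exact Finset.sum_nonneg fun i _ => sq_nonneg _
  -- Chernoff bound
  have hcher := measure_le_le_exp_mul_mgf (μ := μ) (X := ∑ i, X i) w htneg.le h_int
  -- mgf of each X i
  have hmgf : ∀ i, mgf (X i) μ t
      = Real.exp (t * c i ^ 2 / (1 - 2 * t)) / Real.sqrt (1 - 2 * t) := by
    intro i
    have : mgf (X i) μ t = ∫ x, Real.exp (t * (x + c i) ^ 2) ∂(μ.map (Y i)) := by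
      rw [integral_map (hYm i).aemeasurable]
      · rfl
      · exact (Real.continuous_exp.comp
          ((continuous_const.mul ((continuous_id.add continuous_const).pow 2)))).aestronglyMeasurable
    rw [this, hYmap i, aux_gauss (c i) htneg]
  -- the product / mgf_sum
  have hmgfsum : mgf (∑ i, X i) μ t
      = Real.exp (t * l / (1 - 2 * t)) / (Real.sqrt (1 - 2 * t)) ^ k := by
    rw [hXindep.mgf_sum hXm]
    simp_rw [hmgf]
    rw [Finset.prod_div_distrib, Finset.prod_const, ← Real.exp_sum, Finset.card_univ,
      Fintype.card_fin]
    congr 1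
    rw [← Finset.sum_div, ← Finset.mul_sum, ← hl]
  -- identify the events
  have hev : μ {ω | (∑ i, (Z i ω + c i) ^ 2) < w} ≤ μ {ω | (∑ i, X i) ω ≤ w} := by
    have heq : μ {ω | (∑ i, (Z i ω + c i) ^ 2) < w}
        = μ {ω | (∑ i, (Y i ω + c i) ^ 2) < w} := by
      refine measure_congr (Filter.eventuallyEq_set.2 ((ae_all_iff.2 hYae).mono
        fun ω hω => ?_))
      simp only [Set.mem_setOf_eq, hω]
    rw [heq]
    refine measure_mono fun ω hω => ?_
    simp only [Set.mem_setOf_eq, Finset.sum_apply] at hω ⊢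
    exact le_of_lt hω
  refine le_trans (le_trans (ENNReal.toReal_mono (measure_ne_top μ _) hev) hcher)
    (le_of_eq ?_)
  rw [hmgfsum]
  -- final arithmetic
  have hsq : Real.sqrt (1 - 2 * t) = (a / b) ^ ((1:ℝ)/2) := by
    rw [h12t, Real.sqrt_eq_rpow]
  have hab : (0:ℝ) < a / b := by positivity
  have hwl' : w / l = (a / b) ^ (-(2:ℝ)) := by
    rw [Real.rpow_neg hab.le, show ((2:ℝ)) = ((2:ℕ):ℝ) by norm_num, Real.rpow_natCast,
      hw2, hl2, div_pow, inv_div]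
  have hpow : ((Real.sqrt (1 - 2 * t)) ^ k)⁻¹ = (w / l) ^ ((k : ℝ) / 4) := by
    rw [hsq, ← Real.rpow_natCast ((a / b) ^ ((1:ℝ)/2)) k, ← Real.rpow_mul hab.le,
      ← Real.rpow_neg hab.le, hwl', ← Real.rpow_mul hab.le]
    congr 1
    push_cast
    ring
  have hexp : Real.exp (-t * w) * Real.exp (t * l / (1 - 2 * t))
      = Real.exp (-(a - b) ^ 2 / 2) := by
    rw [← Real.exp_add]
    congr 1
    rw [h12t, hw2, hl2, hts]
    field_simp
    ring
  calc Real.exp (-t * w) * (Real.exp (t * l / (1 - 2 * t)) / (Real.sqrt (1 - 2 * t)) ^ k)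
      = ((Real.sqrt (1 - 2 * t)) ^ k)⁻¹
        * (Real.exp (-t * w) * Real.exp (t * l / (1 - 2 * t))) := by ring
    _ = (w / l) ^ ((k : ℝ) / 4) * Real.exp (-(a - b) ^ 2 / 2) := by rw [hpow, hexp]
end

section
/- Right tail bound for non-central chi-squared: let X ∼ χ²_k(λ) with λ > 0. Then for any w > λ + k, P(X > w) ≤ (e w / λ)^{k/2} · exp(−λ/2 − (w/2)(1 − λ/k)). -/
open MeasureTheory ProbabilityTheory


open MeasureTheory ProbabilityTheory Real
open scoped ENNReal NNReal

lemma chi_pointwise {t c : ℝ} (ht : t < 1/2) (x : ℝ) :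
    gaussianPDFReal 0 1 x * Real.exp (t * (x + c)^2)
      = (Real.sqrt (2 * π))⁻¹ * Real.exp (t * c^2 / (1 - 2*t))
          * Real.exp (-((1 - 2*t)/2) * (x - 2*t*c/(1-2*t))^2) := by
  have h2t : (1 : ℝ) - 2*t ≠ 0 := by linarith
  rw [gaussianPDFReal]
  simp only [NNReal.coe_one, mul_one, sub_zero]
  have hexp : -x^2/2 + t*(x+c)^2
      = t*c^2/(1-2*t) + (-((1 - 2*t)/2) * (x - 2*t*c/(1-2*t))^2) := by
    field_simp
    ring
  calc (√(2*π))⁻¹ * rexp (-x ^ 2 / 2) * rexp (t * (x + c) ^ 2)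
      = (√(2*π))⁻¹ * rexp (-x^2/2 + t*(x+c)^2) := by rw [Real.exp_add]; ring
    _ = _ := by rw [hexp, Real.exp_add]; ring

lemma chi_pointwise' {t c : ℝ} (ht : t < 1/2) :
    (fun x => ((gaussianPDFReal 0 1 x).toNNReal : ℝ) * Real.exp (t * (x + c)^2))
      = fun x => (Real.sqrt (2 * π))⁻¹ * Real.exp (t * c^2 / (1 - 2*t))
          * Real.exp (-((1 - 2*t)/2) * (x - 2*t*c/(1-2*t))^2) := by
  funext x
  rw [Real.coe_toNNReal _ (gaussianPDFReal_nonneg 0 1 x), chi_pointwise ht]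

lemma chi_integrable {t c : ℝ} (ht : t < 1/2) :
    Integrable (fun x => Real.exp (t * (x + c)^2)) (gaussianReal 0 1) := by
  rw [gaussianReal_of_var_ne_zero 0 one_ne_zero]
  have hd : gaussianPDF 0 1 = fun x => (((gaussianPDFReal 0 1 x).toNNReal : ℝ≥0) : ℝ≥0∞) := rfl
  rw [hd, integrable_withDensity_iff_integrable_smul
    ((measurable_gaussianPDFReal 0 1).real_toNNReal)]
  simp only [NNReal.smul_def, smul_eq_mul]
  rw [chi_pointwise' ht]
  exact (((integrable_exp_neg_mul_sq (by linarith : (0:ℝ) < (1 - 2*t)/2)).comp_sub_right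
    (2*t*c/(1-2*t))).const_mul _)

lemma chi_integral {t c : ℝ} (ht : t < 1/2) :
    ∫ x, Real.exp (t * (x + c)^2) ∂(gaussianReal 0 1)
      = (Real.sqrt (1 - 2*t))⁻¹ * Real.exp (t * c^2 / (1 - 2*t)) := by
  have h2t : (0:ℝ) < 1 - 2*t := by linarith
  rw [gaussianReal_of_var_ne_zero 0 one_ne_zero]
  have hd : gaussianPDF 0 1 = fun x => (((gaussianPDFReal 0 1 x).toNNReal : ℝ≥0) : ℝ≥0∞) := rfl
  rw [hd, integral_withDensity_eq_integral_smul ((measurable_gaussianPDFReal 0 1).real_toNNReal)]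
  simp only [NNReal.smul_def, smul_eq_mul]
  rw [chi_pointwise' ht, MeasureTheory.integral_const_mul,
    integral_sub_right_eq_self (μ := volume) (fun x => Real.exp (-((1 - 2*t)/2) * x^2)) (2*t*c/(1-2*t)),
    integral_gaussian]
  have harg : π / ((1 - 2*t)/2) = 2*π/(1-2*t) := by field_simp
  rw [harg, Real.sqrt_div (by positivity : (0:ℝ) ≤ 2*π)]
  have h2pi : Real.sqrt (2*π) ≠ 0 := by positivity
  field_simp

open MeasureTheory ProbabilityTheory

lemma iIndepFun_of_ae_eq {Ω ι : Type*} [MeasurableSpace Ω] {μ : Measure Ω}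
    {f g : ι → Ω → ℝ} (h : iIndepFun f μ)
    (hfg : ∀ i, f i =ᵐ[μ] g i) :
    iIndepFun g μ := by
  rw [iIndepFun_iff_measure_inter_preimage_eq_mul] at h ⊢
  intro S sets hsets
  have h1 : ∀ i, (f i ⁻¹' sets i : Set Ω) =ᵐ[μ] (g i ⁻¹' sets i : Set Ω) := by
    intro i
    filter_upwards [hfg i] with ω hω
    show (ω ∈ f i ⁻¹' sets i) = (ω ∈ g i ⁻¹' sets i)
    simp [Set.mem_preimage, hω]
  have h2 : (⋂ i ∈ S, f i ⁻¹' sets i : Set Ω) =ᵐ[μ] (⋂ i ∈ S, g i ⁻¹' sets i : Set Ω) := by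
    have hall : ∀ᵐ ω ∂μ, ∀ i ∈ S, f i ω = g i ω :=
      (ae_ball_iff S.countable_toSet).2 fun i _ => hfg i
    filter_upwards [hall] with ω hω
    show (ω ∈ ⋂ i ∈ S, f i ⁻¹' sets i) = (ω ∈ ⋂ i ∈ S, g i ⁻¹' sets i)
    simp only [Set.mem_iInter, Set.mem_preimage, eq_iff_iff]
    exact ⟨fun H i hi => (hω i hi) ▸ H i hi, fun H i hi => (hω i hi).symm ▸ H i hi⟩
  calc μ (⋂ i ∈ S, g i ⁻¹' sets i) = μ (⋂ i ∈ S, f i ⁻¹' sets i) := (measure_congr h2).symm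
    _ = ∏ i ∈ S, μ (f i ⁻¹' sets i) := h S hsets
    _ = ∏ i ∈ S, μ (g i ⁻¹' sets i) := Finset.prod_congr rfl fun i _ => measure_congr (h1 i)


/-- Right tail bound for a non-central chi-squared variable `X = ∑_{i<k} (Z_i + c_i)²` with
`k ≥ 1` degrees of freedom and non-centrality parameter `λ = ∑ c_i² > 0`: for any
`w > λ + k`, `P(X > w) ≤ (e w/λ)^(k/2) exp(-λ/2 - (w/2)(1 - λ/k))`. -/
theorem stmt14 {Ω : Type*} [MeasurableSpace Ω] (μ : Measure Ω) [IsProbabilityMeasure μ]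
    {k : ℕ} (hk : 1 ≤ k) (Z : Fin k → Ω → ℝ)
    (hZ : ∀ i, μ.map (Z i) = gaussianReal 0 1)
    (hindep : iIndepFun Z μ)
    (c : Fin k → ℝ) (l : ℝ) (hl : l = ∑ i, (c i) ^ 2) (hlpos : 0 < l)
    (w : ℝ) (hw : l + k < w) :
    (μ {ω | w < ∑ i, (Z i ω + c i) ^ 2}).toReal ≤
      (Real.exp 1 * w / l) ^ ((k : ℝ) / 2) *
        Real.exp (-l / 2 - (w / 2) * (1 - l / k)) := by
  have hkpos : (0:ℝ) < k := by exact_mod_cast hk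
  by_cases hlk : (k:ℝ) ≤ l
  · -- trivial case: RHS ≥ 1
    have hLHS : (μ {ω | w < ∑ i, (Z i ω + c i) ^ 2}).toReal ≤ 1 := by
      rw [← ENNReal.toReal_one]
      exact ENNReal.toReal_mono ENNReal.one_ne_top prob_le_one
    refine hLHS.trans ?_
    have hwl : Real.exp 1 ≤ Real.exp 1 * w / l := by
      rw [mul_div_assoc]
      nth_rewrite 1 [← mul_one (Real.exp 1)]
      exact mul_le_mul_of_nonneg_left ((one_le_div hlpos).2 (by linarith)) (Real.exp_pos 1).le
    have h2 : Real.exp ((k:ℝ)/2) ≤ (Real.exp 1 * w / l) ^ ((k : ℝ) / 2) := by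
      rw [← Real.exp_one_rpow ((k:ℝ)/2)]
      exact Real.rpow_le_rpow (Real.exp_pos 1).le hwl (by positivity)
    have h3 : (0:ℝ) ≤ (k:ℝ)/2 + (-l / 2 - (w / 2) * (1 - l / k)) := by
      have hwlk : w * (1 - l/k) ≤ (l + k) * (1 - l/k) := by
        apply mul_le_mul_of_nonpos_right hw.le
        have : (1:ℝ) ≤ l/k := (one_le_div hkpos).2 hlk
        linarith
      have hid : (k:ℝ)/2 + (-l/2 - ((l+k)/2) * (1 - l/k)) = l * (l - k) / (2*k) := by
        field_simp; ring
      have hpos : (0:ℝ) ≤ l * (l - k) / (2*k) :=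
        div_nonneg (mul_nonneg hlpos.le (by linarith)) (by linarith)
      linarith
    calc (1:ℝ) = Real.exp 0 := Real.exp_zero.symm
      _ ≤ Real.exp ((k:ℝ)/2 + (-l / 2 - (w / 2) * (1 - l / k))) := Real.exp_le_exp.2 h3
      _ = Real.exp ((k:ℝ)/2) * Real.exp (-l / 2 - (w / 2) * (1 - l / k)) := Real.exp_add _ _
      _ ≤ _ := mul_le_mul_of_nonneg_right h2 (Real.exp_pos _).le
  · -- Chernoff case: l < k
    push_neg at hlk
    have hZae : ∀ i, AEMeasurable (Z i) μ := by
      intro i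
      by_contra hae
      have h0 := Measure.map_of_not_aemeasurable hae
      rw [hZ i] at h0
      exact (IsProbabilityMeasure.ne_zero (gaussianReal 0 1)) h0
    set Z' : Fin k → Ω → ℝ := fun i => (hZae i).mk (Z i) with hZ'def
    have hZ'meas : ∀ i, Measurable (Z' i) := fun i => (hZae i).measurable_mk
    have hZ'ae : ∀ i, Z i =ᵐ[μ] Z' i := fun i => (hZae i).ae_eq_mk
    have hZ'map : ∀ i, μ.map (Z' i) = gaussianReal 0 1 := fun i => by
      rw [← Measure.map_congr (hZ'ae i), hZ i]
    have hindep' : iIndepFun Z' μ := iIndepFun_of_ae_eq hindep hZ'ae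
    set X : Fin k → Ω → ℝ := fun i ω => (Z' i ω + c i)^2 with hXdef
    have hXmeas : ∀ i, Measurable (X i) := fun i => ((hZ'meas i).add_const (c i)).pow_const 2
    have hXindep : iIndepFun X μ :=
      hindep'.comp (fun i x => (x + c i)^2)
        (fun i => (measurable_id.add_const (c i)).pow_const 2)
    have hset : μ {ω | w < ∑ i, (Z i ω + c i) ^ 2} = μ {ω | w < (∑ i, X i) ω} := by
      apply measure_congr
      have hall : ∀ᵐ ω ∂μ, ∀ i, Z i ω = Z' i ω := ae_all_iff.2 hZ'ae
      filter_upwards [hall] with ω hω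
      have hsum : ∑ i, (Z i ω + c i) ^ 2 = (∑ i, X i) ω := by
        simp only [Finset.sum_apply, hXdef]
        exact Finset.sum_congr rfl fun i _ => by rw [hω i]
      show (w < ∑ i, (Z i ω + c i) ^ 2) = (w < (∑ i, X i) ω)
      rw [hsum]
    set t : ℝ := (k - l)/(2*k) with htdef
    have ht0 : 0 ≤ t := div_nonneg (by linarith) (by linarith)
    have ht2 : 1 - 2*t = l/k := by rw [htdef]; field_simp; ring
    have hlk0 : (0:ℝ) < l/k := div_pos hlpos hkpos
    have htlt : t < 1/2 := by
      have : 0 < 1 - 2*t := ht2 ▸ hlk0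
      linarith
    have hint : ∀ i, Integrable (fun ω => Real.exp (t * X i ω)) μ := by
      intro i
      have hg : Integrable (fun x => Real.exp (t * (x + c i)^2)) (gaussianReal 0 1) :=
        chi_integrable htlt
      rw [← hZ'map i] at hg
      have hasm : AEStronglyMeasurable (fun x => Real.exp (t * (x + c i)^2))
          (μ.map (Z' i)) :=
        (Continuous.aestronglyMeasurable (by continuity))
      exact (integrable_map_measure hasm (hZ'meas i).aemeasurable).mp hg
    have hmgf : ∀ i, mgf (X i) μ t
        = (Real.sqrt (1-2*t))⁻¹ * Real.exp (t * (c i)^2/(1-2*t)) := by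
      intro i
      have hasm : AEStronglyMeasurable (fun x => Real.exp (t * (x + c i)^2))
          (μ.map (Z' i)) :=
        (Continuous.aestronglyMeasurable (by continuity))
      rw [mgf, ← chi_integral (c := c i) htlt, ← hZ'map i,
        integral_map (hZ'meas i).aemeasurable hasm]
    have hintsum : Integrable (fun ω => Real.exp (t * (∑ i, X i) ω)) μ :=
      hXindep.integrable_exp_mul_sum hXmeas fun i _ => hint i
    have hcher := measure_ge_le_exp_mul_mgf (μ := μ) (X := ∑ i, X i) w ht0 hintsum
    have hmono : (μ {ω | w < (∑ i, X i) ω}).toReal ≤ (μ {ω | w ≤ (∑ i, X i) ω}).toReal :=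
      ENNReal.toReal_mono (measure_ne_top μ _) (measure_mono (Set.setOf_subset_setOf.mpr fun ω h => h.le))
    have hprod : mgf (∑ i, X i) μ t = (l/k) ^ (-(k:ℝ)/2) * Real.exp ((k - l)/2) := by
      rw [hXindep.mgf_sum hXmeas Finset.univ]
      rw [Finset.prod_congr rfl fun i (_ : i ∈ Finset.univ) => hmgf i]
      rw [Finset.prod_mul_distrib, Finset.prod_const, ← Real.exp_sum]
      congr 1
      · rw [ht2]
        have h1 : (Real.sqrt (l/k))⁻¹ = (l/k) ^ (-(1:ℝ)/2) := by
          rw [show (-(1:ℝ)/2) = -(1/2 : ℝ) by norm_num, Real.rpow_neg hlk0.le,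
            Real.sqrt_eq_rpow]
        rw [Finset.card_univ, Fintype.card_fin, h1, ← Real.rpow_natCast ((l/k) ^ (-(1:ℝ)/2)) k,
          ← Real.rpow_mul hlk0.le]
        congr 1
        ring
      · congr 1
        rw [ht2]
        have : ∀ i, t * (c i)^2 / (l/k) = (t * k / l) * (c i)^2 := by
          intro i; field_simp
        rw [Finset.sum_congr rfl fun i _ => this i, ← Finset.mul_sum, ← hl, htdef]
        field_simp
    -- final arithmetic
    have hterm : -t * w = -(w/2) * (1 - l/k) := by
      rw [htdef]; field_simp
    have hbase : (l/k) ^ (-(k:ℝ)/2) ≤ (w/l) ^ ((k:ℝ)/2) := by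
      have h1 : (l/k) ^ (-(k:ℝ)/2) = (k/l) ^ ((k:ℝ)/2) := by
        rw [show (-(k:ℝ)/2) = -((k:ℝ)/2) by ring, Real.rpow_neg hlk0.le,
          ← Real.inv_rpow hlk0.le, inv_div]
      rw [h1]
      apply Real.rpow_le_rpow (div_nonneg hkpos.le hlpos.le) _ (by positivity)
      gcongr
      linarith
    have hRHS : (Real.exp 1 * w / l) ^ ((k : ℝ) / 2) *
          Real.exp (-l / 2 - (w / 2) * (1 - l / k))
        = (w/l) ^ ((k:ℝ)/2) * (Real.exp ((k:ℝ)/2) * Real.exp (-l / 2 - (w / 2) * (1 - l / k))) := by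
      rw [mul_div_assoc, Real.mul_rpow (Real.exp_pos 1).le (div_nonneg (by linarith) hlpos.le),
        Real.exp_one_rpow]
      ring
    calc (μ {ω | w < ∑ i, (Z i ω + c i) ^ 2}).toReal
        = (μ {ω | w < (∑ i, X i) ω}).toReal := by rw [hset]
      _ ≤ (μ {ω | w ≤ (∑ i, X i) ω}).toReal := hmono
      _ ≤ Real.exp (-t * w) * mgf (∑ i, X i) μ t := hcher
      _ = (l/k) ^ (-(k:ℝ)/2) * (Real.exp (-t*w) * Real.exp ((k - l)/2)) := by
          rw [hprod]; ring
      _ ≤ (w/l) ^ ((k:ℝ)/2) * (Real.exp (-t*w) * Real.exp ((k - l)/2)) := by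
          apply mul_le_mul_of_nonneg_right hbase (by positivity)
      _ = (w/l) ^ ((k:ℝ)/2) * (Real.exp ((k:ℝ)/2) * Real.exp (-l / 2 - (w / 2) * (1 - l / k))) := by
          have he : -t*w + ((k:ℝ) - l)/2 = (k:ℝ)/2 + (-l / 2 - (w / 2) * (1 - l / k)) := by
            rw [hterm]; ring
          rw [← Real.exp_add, ← Real.exp_add, he]
      _ = _ := hRHS.symm
end

section
/- Let Y = (Y₁, …, Y_p) ~ N(0, Σ⁰) with Σ⁰ positive definite, and let Ω⁰ = (Σ⁰)⁻¹. Fix the index p and let z⁰ ⊆ {1,…,p−1} be the support of Ω⁰_{-p,p}. Then Σ⁰_{-p,p} = −(1/Ω⁰_{pp}) Σ⁰_{-p,z⁰} Ω⁰_{z⁰,p}; moreover, for any index set z′ with z⁰ ⊆ z′ ⊆ {1,…,p−1} and any k ∉ z′ ∪ {p}, the partial regression identity Σ⁰_{kp} = Σ⁰_{k z′} (Σ⁰_{z′z′})⁻¹ Σ⁰_{z′ p} holds. -/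
open Matrix
open scoped Classical

lemma posDef_submatrix_inj {n m' : Type*} [Fintype n] [DecidableEq n] [Fintype m']
    [DecidableEq m'] {M : Matrix n n ℝ} (hM : M.PosDef) {e : m' → n}
    (he : Function.Injective e) : (M.submatrix e e).PosDef := by
  refine posDef_iff_dotProduct_mulVec.mpr ⟨?_, ?_⟩
  · show (M.submatrix e e)ᴴ = _
    rw [conjTranspose_submatrix, hM.1.eq]
  · intro x hx
    set P : Matrix n m' ℝ := Matrix.of fun i a => if e a = i then 1 else 0 with hP
    have hPx : ∀ a, (P *ᵥ x) (e a) = x a := by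
      intro a
      simp [hP, mulVec, dotProduct, he.eq_iff]
    have hsub : M.submatrix e e = Pᵀ * M * P := by
      ext a b
      simp [hP, Matrix.mul_apply, Finset.sum_ite_eq, ite_mul, mul_ite]
    have hy0 : P *ᵥ x ≠ 0 := by
      intro h
      apply hx
      funext a
      have := congrFun h (e a)
      rwa [hPx a] at this
    have h2 := hM.dotProduct_mulVec_pos hy0
    have hPT : Pᴴ = Pᵀ := by simp [hP]
    calc (0:ℝ) < star (P *ᵥ x) ⬝ᵥ M *ᵥ (P *ᵥ x) := h2
    _ = star x ⬝ᵥ (M.submatrix e e) *ᵥ x := by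
        rw [hsub, star_mulVec, hPT, ← dotProduct_mulVec, mulVec_mulVec, mulVec_mulVec]

/-- Let `Σ⁰` be a positive-definite covariance matrix (indexed by `m ⊕ Unit`, the last
coordinate playing the role of `p`) with precision matrix `Ω⁰ = (Σ⁰)⁻¹`, and let
`z⁰ ⊆ {1,…,p-1}` be the support of `Ω⁰_{-p,p}`. Then
`Σ⁰_{-p,p} = -(1/Ω⁰_{pp}) Σ⁰_{-p,z⁰} Ω⁰_{z⁰,p}`, and for every superset `z′ ⊇ z⁰` and every
`k ∉ z′`, the partial regression identity `Σ⁰_{kp} = Σ⁰_{k z′} (Σ⁰_{z′z′})⁻¹ Σ⁰_{z′p}` holds. -/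
theorem stmt15 {m : Type*} [Fintype m] [DecidableEq m]
    (S : Matrix (m ⊕ Unit) (m ⊕ Unit) ℝ) (hSsymm : S.IsSymm) (hS : S.PosDef) :
    (∀ i : m, S (Sum.inl i) (Sum.inr ()) =
      -(1 / S⁻¹ (Sum.inr ()) (Sum.inr ())) *
        ∑ j ∈ Finset.univ.filter (fun j : m => S⁻¹ (Sum.inl j) (Sum.inr ()) ≠ 0),
          S (Sum.inl i) (Sum.inl j) * S⁻¹ (Sum.inl j) (Sum.inr ())) ∧
    (∀ z' : Finset m,
      Finset.univ.filter (fun j : m => S⁻¹ (Sum.inl j) (Sum.inr ()) ≠ 0) ⊆ z' →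
      ∀ k : m, k ∉ z' →
        S (Sum.inl k) (Sum.inr ()) =
          (fun a : ↥z' => S (Sum.inl k) (Sum.inl a.1)) ⬝ᵥ
            (((S.submatrix (fun a : ↥z' => (Sum.inl a.1 : m ⊕ Unit))
                (fun a : ↥z' => (Sum.inl a.1 : m ⊕ Unit)))⁻¹) *ᵥ
              (fun a : ↥z' => S (Sum.inl a.1) (Sum.inr ())))) := by
  set T := S⁻¹ with hT
  have hTpd : T.PosDef := hS.inv
  have hTpp : 0 < T (Sum.inr ()) (Sum.inr ()) := by
    have := hTpd.dotProduct_mulVec_pos (x := Pi.single (Sum.inr ()) 1) (by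
      intro h
      have := congrFun h (Sum.inr ())
      simp at this)
    simpa [dotProduct, mulVec, Pi.single_apply] using this
  have hdet : IsUnit S.det := (isUnit_iff_isUnit_det S).1 hS.isUnit
  have hmul : S * T = 1 := mul_nonsing_inv S hdet
  have hkey : ∀ i : m,
      (∑ j : m, S (Sum.inl i) (Sum.inl j) * T (Sum.inl j) (Sum.inr ())) +
        S (Sum.inl i) (Sum.inr ()) * T (Sum.inr ()) (Sum.inr ()) = 0 := by
    intro i
    have := congrFun (congrFun hmul (Sum.inl i)) (Sum.inr ())
    rw [Matrix.mul_apply, Fintype.sum_sum_type] at this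
    simpa using this
  have hfull : ∀ i : m, S (Sum.inl i) (Sum.inr ()) =
      -(1 / T (Sum.inr ()) (Sum.inr ())) *
        ∑ j : m, S (Sum.inl i) (Sum.inl j) * T (Sum.inl j) (Sum.inr ()) := by
    intro i
    have h := hkey i
    field_simp
    linarith [h]
  constructor
  · intro i
    rw [hfull i]
    congr 1
    symm
    refine Finset.sum_filter_of_ne ?_
    intro j _ hne
    intro h0
    apply hne
    rw [h0, mul_zero]
  · intro z' hz' k hk
    have hTZ : ∀ j : m, j ∉ z' → T (Sum.inl j) (Sum.inr ()) = 0 := by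
      intro j hj
      by_contra h
      exact hj (hz' (Finset.mem_filter.2 ⟨Finset.mem_univ j, h⟩))
    have hsum_z : ∀ i : m, S (Sum.inl i) (Sum.inr ()) =
        ∑ a : ↥z', S (Sum.inl i) (Sum.inl a.1) *
          (-(1 / T (Sum.inr ()) (Sum.inr ())) * T (Sum.inl a.1) (Sum.inr ())) := by
      intro i
      rw [hfull i, Finset.mul_sum, Finset.sum_coe_sort z'
        (fun j => S (Sum.inl i) (Sum.inl j) *
          (-(1 / T (Sum.inr ()) (Sum.inr ())) * T (Sum.inl j) (Sum.inr ())))]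
      rw [Finset.sum_subset (Finset.subset_univ z')]
      · exact Finset.sum_congr rfl (fun j _ => by ring)
      · intro j _ hj
        rw [hTZ j hj]
        ring
    set e : ↥z' → m ⊕ Unit := fun a => Sum.inl a.1 with he
    have heinj : Function.Injective e :=
      fun a b h => Subtype.ext (Sum.inl_injective h)
    set M := S.submatrix e e with hM
    have hMpd : M.PosDef := posDef_submatrix_inj hS heinj
    have hMdet : IsUnit M.det := (isUnit_iff_isUnit_det M).1 hMpd.isUnit
    set w : ↥z' → ℝ := fun a =>
      -(1 / T (Sum.inr ()) (Sum.inr ())) * T (Sum.inl a.1) (Sum.inr ()) with hw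
    have hMw : M *ᵥ w = fun a : ↥z' => S (Sum.inl a.1) (Sum.inr ()) := by
      funext a
      rw [hsum_z a.1]
      simp [hM, hw, mulVec, dotProduct, he]
    have hinv : M⁻¹ *ᵥ (fun a : ↥z' => S (Sum.inl a.1) (Sum.inr ())) = w := by
      rw [← hMw, mulVec_mulVec, nonsing_inv_mul M hMdet, one_mulVec]
    rw [hinv, dotProduct]
    rw [hsum_z k]
end

section
/- Gibbs positive-definiteness preservation: let Ω_{-p,-p} be a symmetric positive-definite (p−1)×(p−1) matrix, z ⊆ {1,…,p−1}, u₁ ∈ ℝ^{|z|}, and u₂ > 0. Define Ω ∈ ℝ^{p×p} by keeping the block Ω_{-p,-p}, setting Ω_{z,p} = Ω_{p,z} = −u₁, Ω_{k,p} = 0 for k ∉ z, and Ω_{pp} = u₂ + u₁ᵀ Σ_{zz|p} u₁ where Σ_{zz|p} := [(Ω_{-p,-p})⁻¹]_{zz}. Then Ω is symmetric positive definite. -/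
open Matrix

section aux

lemma posDef_fromBlocks₁₁_aux {m n : Type*} [Fintype m] [DecidableEq m] [Fintype n]
    {A : Matrix m m ℝ} (B : Matrix m n ℝ) (D : Matrix n n ℝ) (hA : A.PosDef)
    (hS : (D - Bᴴ * A⁻¹ * B).PosDef) :
    (Matrix.fromBlocks A B Bᴴ D).PosDef := by
  haveI : Invertible A := invertibleOfIsUnitDet A (isUnit_iff_ne_zero.mpr hA.det_pos.ne')
  rw [posDef_iff_dotProduct_mulVec]
  constructor
  · rw [Matrix.IsHermitian.fromBlocks₁₁ _ _ hA.1]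
    exact hS.1
  · intro x hx
    rw [Matrix.dotProduct_mulVec, ← Sum.elim_comp_inl_inr x,
      Matrix.schur_complement_eq₁₁ B D _ _ hA.1]
    rcases eq_or_ne (x ∘ Sum.inr) 0 with hy | hy
    · have hx1 : x ∘ Sum.inl ≠ 0 := by
        intro h
        apply hx
        rw [← Sum.elim_comp_inl_inr x, h, hy]
        ext (i | i) <;> rfl
      have h1 : x ∘ Sum.inl + (A⁻¹ * B) *ᵥ (x ∘ Sum.inr) = x ∘ Sum.inl := by
        rw [hy, Matrix.mulVec_zero, add_zero]
      rw [h1, hy]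
      simp only [star_zero, Matrix.zero_vecMul, dotProduct_zero, add_zero,
        ← Matrix.dotProduct_mulVec]
      exact hA.dotProduct_mulVec_pos hx1
    · have h1 : (0:ℝ) ≤ star (x ∘ Sum.inl + (A⁻¹ * B) *ᵥ (x ∘ Sum.inr)) ᵥ* A ⬝ᵥ
          (x ∘ Sum.inl + (A⁻¹ * B) *ᵥ (x ∘ Sum.inr)) := by
        rw [← Matrix.dotProduct_mulVec]
        exact (posSemidef_iff_dotProduct_mulVec.mp hA.posSemidef).2 _
      have h2 : (0:ℝ) < star (x ∘ Sum.inr) ᵥ* (D - Bᴴ * A⁻¹ * B) ⬝ᵥ (x ∘ Sum.inr) := by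
        rw [← Matrix.dotProduct_mulVec]
        exact hS.dotProduct_mulVec_pos hy
      linarith

end aux

/-- Gibbs positive-definiteness preservation: given a symmetric positive-definite block
`Ω_{-p,-p} = B`, an index set `z`, a vector `u₁` on `z` and `u₂ > 0`, the matrix `Ω` obtained
by keeping `B`, setting `Ω_{z,p} = Ω_{p,z} = -u₁` (zero off `z`) and
`Ω_{pp} = u₂ + u₁ᵀ Σ_{zz|p} u₁` with `Σ_{zz|p} := [B⁻¹]_{zz}`, is symmetric positive definite. -/
theorem stmt19 {m : Type*} [Fintype m] [DecidableEq m]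
    (B : Matrix m m ℝ) (hBsymm : B.IsSymm) (hB : B.PosDef)
    (z : Finset m) (u₁ : ↥z → ℝ) (u₂ : ℝ) (hu₂ : 0 < u₂) :
    (Matrix.fromBlocks B
        (Matrix.replicateCol Unit (fun k : m => if h : k ∈ z then -u₁ ⟨k, h⟩ else 0))
        (Matrix.replicateRow Unit (fun k : m => if h : k ∈ z then -u₁ ⟨k, h⟩ else 0))
        (Matrix.of fun _ _ => u₂ +
          u₁ ⬝ᵥ ((B⁻¹.submatrix (fun a : ↥z => (a : m)) (fun a : ↥z => (a : m))) *ᵥ u₁))).PosDef := by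
  set v : m → ℝ := fun k : m => if h : k ∈ z then -u₁ ⟨k, h⟩ else 0 with hv
  have hrow : Matrix.replicateRow Unit v = (Matrix.replicateCol Unit v)ᴴ := by
    ext i j; simp [Matrix.replicateRow, Matrix.replicateCol]
  rw [hrow]
  apply posDef_fromBlocks₁₁_aux _ _ hB
  have hvz : ∀ k ∉ z, v k = 0 := fun k hk => by simp [hv, dif_neg hk]
  have inner : ∀ a : ↥z, (B⁻¹ *ᵥ v) (a : m) =
      ∑ b : ↥z, B⁻¹ (a : m) (b : m) * (-u₁ b) := by
    intro a
    show ∑ l : m, B⁻¹ (a : m) l * v l = _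
    rw [← Finset.sum_subset z.subset_univ
      (fun l _ hl => by rw [hvz l hl, mul_zero]),
      ← Finset.sum_coe_sort z (fun l => B⁻¹ (a : m) l * v l)]
    exact Finset.sum_congr rfl fun b _ => by simp [hv, dif_pos b.2]
  have key : u₁ ⬝ᵥ ((B⁻¹.submatrix (fun a : ↥z => (a : m)) (fun a : ↥z => (a : m))) *ᵥ u₁)
      = v ⬝ᵥ B⁻¹ *ᵥ v := by
    show _ = ∑ k : m, v k * (B⁻¹ *ᵥ v) k
    rw [← Finset.sum_subset z.subset_univ
      (fun k _ hk => by rw [hvz k hk, zero_mul]),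
      ← Finset.sum_coe_sort z (fun k => v k * (B⁻¹ *ᵥ v) k)]
    refine Finset.sum_congr rfl fun a _ => ?_
    rw [inner a]
    simp only [hv, dif_pos a.2, Matrix.mulVec, dotProduct,
      Matrix.submatrix_apply, Finset.mul_sum, neg_mul, neg_neg]
    exact Finset.sum_congr rfl fun b _ => by ring
  have hM : ((Matrix.replicateCol Unit v)ᴴ * B⁻¹ * Matrix.replicateCol Unit v) =
      Matrix.of fun _ _ : Unit => v ⬝ᵥ B⁻¹ *ᵥ v := by
    ext i j
    simp only [Matrix.mul_apply, Matrix.conjTranspose_apply, Matrix.replicateCol_apply,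
      Matrix.of_apply, dotProduct, Matrix.mulVec, star_trivial,
      Finset.sum_mul, Finset.mul_sum]
    rw [Finset.sum_comm]
    exact Finset.sum_congr rfl fun k _ => Finset.sum_congr rfl fun l _ => by ring
  have hD : (Matrix.of fun _ _ : Unit => u₂ +
      u₁ ⬝ᵥ ((B⁻¹.submatrix (fun a : ↥z => (a : m)) (fun a : ↥z => (a : m))) *ᵥ u₁))
      - (Matrix.replicateCol Unit v)ᴴ * B⁻¹ * Matrix.replicateCol Unit v
      = Matrix.of fun _ _ : Unit => u₂ := by
    rw [hM]
    ext i j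
    simp [key]
  rw [hD]
  rw [posDef_iff_dotProduct_mulVec]
  refine ⟨?_, ?_⟩
  · ext i j
    simp [Matrix.conjTranspose_apply]
  · intro x hx
    have hx0 : x () ≠ 0 := fun h => hx (by ext i; cases i; exact h)
    have : star x ⬝ᵥ (Matrix.of fun _ _ : Unit => u₂) *ᵥ x = u₂ * (x () * x ()) := by
      simp [dotProduct, Matrix.mulVec, Fintype.sum_unique]
      ring
    rw [this]
    exact mul_pos hu₂ (mul_self_pos.mpr hx0)
end
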